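/- arXiv:2107.07834 — 2 statements merged into one kernel-verified Lean document; each statement's English description precedes it below -/
import Mathlib

section
/- Let N be a rooted weighted digraph with root ρ, leaf set X and non-negative arc weights, and let ℓ, ℓ' ∈ X be leaves such that every arc e with w(e) > 0 that belongs to Anc({ℓ}) also belongs to Anc({ℓ'}). Then for every subset S ⊆ X with ℓ ∈ S, AllPaths-PD_N((S \ {ℓ}) ∪ {ℓ'}) ≥ AllPaths-PD_N(S). -/
attribute [local instance] Classical.propDecidable

/-- A rooted weighted digraph: a finite directed acyclic graph with a distinguished
root from which every vertex is reachable, and non-negative real arc weights.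
The leaf set is the set of sinks. -/
structure RWDigraph (V : Type) where
  verts : Finset V
  arcs : Finset (V × V)
  root : V
  w : V × V → ℝ
  w_nonneg : ∀ e, 0 ≤ w e
  root_mem : root ∈ verts
  arc_mem : ∀ e ∈ arcs, e.1 ∈ verts ∧ e.2 ∈ verts
  acyclic : ∀ v : V, ¬ Relation.TransGen (fun a b => (a, b) ∈ arcs) v v
  reach : ∀ v ∈ verts, Relation.ReflTransGen (fun a b => (a, b) ∈ arcs) root v

namespace RWDigraph

variable {V : Type}

/-- The arc relation of a rooted weighted digraph. -/
def Arc (N : RWDigraph V) (u v : V) : Prop := (u, v) ∈ N.arcs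

/-- The leaf set `X`: the set of sinks (vertices with no outgoing arcs). -/
def leaves (N : RWDigraph V) : Set V := {v | v ∈ N.verts ∧ ∀ u, ¬ N.Arc v u}

/-- `Anc S`: the set of arcs `(u,v)` such that some leaf in `S` is reachable from `v`
by a directed path. -/
def anc (N : RWDigraph V) (S : Set V) : Set (V × V) :=
  {e | N.Arc e.1 e.2 ∧ ∃ ℓ ∈ S, Relation.ReflTransGen N.Arc e.2 ℓ}

/-- `AllPaths-PD_N(S) = ∑_{e ∈ Anc(S)} w(e)`. -/
noncomputable def allPathsPD (N : RWDigraph V) (S : Set V) : ℝ :=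
  ∑ e ∈ N.arcs.filter (fun e => e ∈ N.anc S), N.w e

end RWDigraph

namespace RWDigraph

variable {V : Type} (N : RWDigraph V)

theorem anc_mono {S T : Set V} (hST : S ⊆ T) : N.anc S ⊆ N.anc T :=
  fun _ ⟨harc, ℓ, hℓ, hreach⟩ => ⟨harc, ℓ, hST hℓ, hreach⟩

theorem anc_union (S T : Set V) : N.anc (S ∪ T) = N.anc S ∪ N.anc T := by
  ext e
  simp only [anc, Set.mem_ofPred_eq, Set.mem_union, or_and_right, exists_or, and_or_left]

theorem allPathsPD_le_of_forall_pos_mem_anc {S T : Set V}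
    (hST : ∀ e ∈ N.anc S, 0 < N.w e → e ∈ N.anc T) :
    N.allPathsPD S ≤ N.allPathsPD T := by
  unfold allPathsPD
  rw [← Finset.sum_filter_ne_zero]
  refine Finset.sum_le_sum_of_subset_of_nonneg ?_ fun e _ _ => N.w_nonneg e
  intro e he
  simp only [Finset.mem_filter] at he ⊢
  obtain ⟨⟨harc, he⟩, hw⟩ := he
  exact ⟨harc, hST e he ((N.w_nonneg e).lt_of_ne' hw)⟩

end RWDigraph

theorem allPathsPD_exchange_general {V : Type} (N : RWDigraph V) (ℓ ℓ' : V)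
    (h : ∀ e ∈ N.anc {ℓ}, 0 < N.w e → e ∈ N.anc {ℓ'})
    (S : Set V) :
    N.allPathsPD S ≤ N.allPathsPD ((S \ {ℓ}) ∪ {ℓ'}) := by
  refine N.allPathsPD_le_of_forall_pos_mem_anc fun e he hw => ?_
  have hsplit : e ∈ N.anc (S \ {ℓ}) ∪ N.anc {ℓ} := by
    rw [← N.anc_union]
    exact N.anc_mono (Set.subset_sdiff_union S {ℓ}) he
  rw [N.anc_union]
  rcases hsplit with hrest | hℓ
  · exact Or.inl hrest
  · exact Or.inr (h e hℓ hw)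

/-- if every positive-weight arc ancestral to the leaf `ℓ` is also
ancestral to the leaf `ℓ'`, then replacing `ℓ` by `ℓ'` in any subset `S` of leaves
containing `ℓ` does not decrease the AllPaths-PD score. -/
theorem allPathsPD_exchange {V : Type} (N : RWDigraph V) (ℓ ℓ' : V)
    (hℓ : ℓ ∈ N.leaves) (hℓ' : ℓ' ∈ N.leaves)
    (h : ∀ e ∈ N.anc {ℓ}, 0 < N.w e → e ∈ N.anc {ℓ'})
    (S : Set V) (hS : S ⊆ N.leaves) (hmem : ℓ ∈ S) :
    N.allPathsPD S ≤ N.allPathsPD ((S \ {ℓ}) ∪ {ℓ'}) :=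
  allPathsPD_exchange_general N ℓ ℓ' h S
end

section
/- Let N be a tree-child rooted binary phylogenetic network on X with non-negative arc weights w. Then the minimum, over all connecting subtrees T for X in N, of ∑_{e ∈ T} w(e) exists and equals the sum of w(e) over all tree arcs e of N, plus the sum over all reticulations v of N of the minimum of the weights of the two reticulation arcs directed into v. -/
/-!
In a tree-child network every vertex lies on every connecting subtree `T` for the leaves:
following tree-children from it reaches a leaf, and a non-reticulation has a unique parent, so
`T` contains that whole path. Hence `T` contains every tree arc and exactly one incoming arc at
each reticulation, i.e. `T` is a switching of `N`; conversely every switching is a connecting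
subtree for the leaves. The lightest switching picks a lightest incoming arc at each
reticulation.
-/

attribute [local instance] Classical.propDecidable

/-- A rooted binary phylogenetic network: a finite rooted DAG (without parallel arcs)
in which every vertex is reachable from the root, the root has in-degree 0 and
out-degree 2, every sink (leaf) has in-degree 1, and every other non-root vertex is
either a tree vertex (in-degree 1, out-degree 2) or a reticulation (in-degree 2,
out-degree 1); each arc carries a non-negative real weight. -/
structure PhyloNetwork (V : Type) where
  verts : Finset V
  arcs : Finset (V × V)
  root : V
  w : V × V → ℝ
  w_nonneg : ∀ e, 0 ≤ w e
  root_mem : root ∈ verts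
  arc_mem : ∀ e ∈ arcs, e.1 ∈ verts ∧ e.2 ∈ verts
  acyclic : ∀ v : V, ¬ Relation.TransGen (fun a b => (a, b) ∈ arcs) v v
  reach : ∀ v ∈ verts, Relation.ReflTransGen (fun a b => (a, b) ∈ arcs) root v
  root_indeg : ∀ u : V, (u, root) ∉ arcs
  root_outdeg : {u : V | (root, u) ∈ arcs}.ncard = 2
  leaf_indeg : ∀ v ∈ verts, (∀ u, (v, u) ∉ arcs) → {u : V | (u, v) ∈ arcs}.ncard = 1
  internal_deg : ∀ v ∈ verts, v ≠ root → (∃ u, (v, u) ∈ arcs) →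
    ({u : V | (u, v) ∈ arcs}.ncard = 1 ∧ {u : V | (v, u) ∈ arcs}.ncard = 2) ∨
    ({u : V | (u, v) ∈ arcs}.ncard = 2 ∧ {u : V | (v, u) ∈ arcs}.ncard = 1)

namespace PhyloNetwork

variable {V : Type}

/-- A reticulation: a vertex of in-degree two. -/
def isRet (N : PhyloNetwork V) (v : V) : Prop := {u : V | (u, v) ∈ N.arcs}.ncard = 2

/-- The leaf set `X` of the network: its sinks. -/
def leaves (N : PhyloNetwork V) : Set V := {v | v ∈ N.verts ∧ ∀ u, (v, u) ∉ N.arcs}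

/-- A tree arc: an arc whose head is not a reticulation. -/
def isTreeArc (N : PhyloNetwork V) (e : V × V) : Prop := e ∈ N.arcs ∧ ¬ N.isRet e.2

/-- Tree-child: every non-leaf vertex has a child that is a tree vertex or a leaf
(i.e. a child that is not a reticulation). -/
def TreeChild (N : PhyloNetwork V) : Prop :=
  ∀ v ∈ N.verts, (∃ u, (v, u) ∈ N.arcs) → ∃ u, (v, u) ∈ N.arcs ∧ ¬ N.isRet u

/-- `v` is a vertex of the subgraph with arc set `T` rooted at `ρ`. -/
def inTree (T : Set (V × V)) (ρ : V) (v : V) : Prop :=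
  v = ρ ∨ (∃ u, (u, v) ∈ T) ∨ (∃ u, (v, u) ∈ T)

/-- `T` is a connecting subtree for `S` in `N`: a subgraph of `N` that is an
arborescence rooted at the root of `N` whose set of sinks is exactly `S`. -/
structure IsConnectingSubtree (N : PhyloNetwork V) (T : Set (V × V)) (S : Set V) : Prop where
  subset : ∀ e ∈ T, e ∈ N.arcs
  unique_parent : ∀ u u' v : V, (u, v) ∈ T → (u', v) ∈ T → u = u'
  root_no_parent : ∀ u, (u, N.root) ∉ T
  reach_root : ∀ v, inTree T N.root v →
    Relation.ReflTransGen (fun a b => (a, b) ∈ T) N.root v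
  sinks : {v | inTree T N.root v ∧ ∀ u, (v, u) ∉ T} = S

/-- The total weight `∑_{e ∈ T} w(e)` of a subtree `T` of `N`. -/
noncomputable def subtreeWeight (N : PhyloNetwork V) (T : Set (V × V)) : ℝ :=
  ∑ e ∈ N.arcs.filter (fun e => e ∈ T), N.w e

end PhyloNetwork

theorem Relation.wellFounded_of_finite_transGen {α : Type*} {r : α → α → Prop}
    (hirr : ∀ a, ¬ Relation.TransGen r a a) (hfin : ∀ b, {a | Relation.TransGen r a b}.Finite) :
    WellFounded r := by
  let ancestors b := {a | Relation.TransGen r a b}.ncard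
  have hlt : ∀ {a b}, r a b → ancestors a < ancestors b := fun {a b} hab =>
    Set.ncard_lt_ncard
      ⟨fun _ hc => Relation.TransGen.tail hc hab, fun hsub => hirr a (hsub (.single hab))⟩ (hfin b)
  exact Subrelation.wf hlt (InvImage.wf ancestors wellFounded_lt)

namespace PhyloNetwork

variable {V : Type} (N : PhyloNetwork V)

theorem wellFounded_parent : WellFounded (fun u v => (u, v) ∈ N.arcs) := by
  refine Relation.wellFounded_of_finite_transGen N.acyclic fun v =>
    (N.arcs.image Prod.fst).finite_toSet.subset fun u hu => ?_
  induction hu using Relation.TransGen.head_induction_on with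
  | single h => exact Finset.mem_image_of_mem _ h
  | head h _ _ => exact Finset.mem_image_of_mem _ h

theorem wellFounded_child : WellFounded (fun u v => (v, u) ∈ N.arcs) := by
  refine Relation.wellFounded_of_finite_transGen
    (fun v h => N.acyclic v (Relation.transGen_swap.mp h)) fun v =>
    (N.arcs.image Prod.snd).finite_toSet.subset fun u hu => ?_
  induction hu using Relation.TransGen.head_induction_on with
  | single h => exact Finset.mem_image_of_mem _ h
  | head h _ _ => exact Finset.mem_image_of_mem _ h

theorem ne_root_of_mem_arcs {u v : V} (h : (u, v) ∈ N.arcs) : v ≠ N.root := by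
  rintro rfl
  exact N.root_indeg u h

theorem exists_parent {v : V} (hv : v ∈ N.verts) (hvr : v ≠ N.root) : ∃ u, (u, v) ∈ N.arcs := by
  rcases (N.reach v hv).cases_tail with h | ⟨u, _, hu⟩
  · exact absurd h hvr
  · exact ⟨u, hu⟩

theorem exists_mem_arcs_of_isRet {v : V} (hv : N.isRet v) : ∃ u, (u, v) ∈ N.arcs :=
  Set.nonempty_of_ncard_ne_zero (s := {u | (u, v) ∈ N.arcs}) (by rw [hv]; norm_num)

theorem eq_of_mem_arcs_of_not_isRet {u u' v : V} (hv : ¬ N.isRet v)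
    (hu : (u, v) ∈ N.arcs) (hu' : (u', v) ∈ N.arcs) : u = u' := by
  have hvv : v ∈ N.verts := (N.arc_mem _ hu).2
  have hindeg : {u : V | (u, v) ∈ N.arcs}.ncard = 1 := by
    by_cases hout : ∃ x, (v, x) ∈ N.arcs
    · exact (N.internal_deg v hvv (N.ne_root_of_mem_arcs hu) hout).resolve_right
        (fun h => hv h.1) |>.1
    · exact N.leaf_indeg v hvv (not_exists.mp hout)
  obtain ⟨a, ha⟩ := Set.ncard_eq_one.mp hindeg
  have hparent : ∀ x, (x, v) ∈ N.arcs → x = a := fun _ hx => ha.subset hx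
  exact (hparent u hu).trans (hparent u' hu').symm

def inArcWeights (v : V) : Set ℝ := {t | ∃ u, (u, v) ∈ N.arcs ∧ t = N.w (u, v)}

theorem inArcWeights_finite (v : V) : (N.inArcWeights v).Finite :=
  (N.arcs.image N.w).finite_toSet.subset fun _ ⟨_, hu, ht⟩ => ht ▸ Finset.mem_image_of_mem _ hu

theorem csInf_inArcWeights_le {u v : V} (h : (u, v) ∈ N.arcs) : sInf (N.inArcWeights v) ≤ N.w (u, v) :=
  csInf_le (N.inArcWeights_finite v).bddBelow ⟨u, h, rfl⟩

def IsParentChoice (p : V → V) : Prop := ∀ v, N.isRet v → (p v, v) ∈ N.arcs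

theorem exists_isParentChoice_w_eq_sInf :
    ∃ p, N.IsParentChoice p ∧ ∀ v, N.isRet v → N.w (p v, v) = sInf (N.inArcWeights v) := by
  have hmin : ∀ v, ∃ u, N.isRet v → (u, v) ∈ N.arcs ∧ N.w (u, v) = sInf (N.inArcWeights v) := by
    intro v
    by_cases hv : N.isRet v
    · obtain ⟨u₀, hu₀⟩ := N.exists_mem_arcs_of_isRet hv
      have hne : (N.inArcWeights v).Nonempty := ⟨_, u₀, hu₀, rfl⟩
      obtain ⟨u, hu, ht⟩ := hne.csInf_mem (N.inArcWeights_finite v)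
      exact ⟨u, fun _ => ⟨hu, ht.symm⟩⟩
    · exact ⟨v, fun h => absurd h hv⟩
  choose p hp using hmin
  exact ⟨p, fun v hv => (hp v hv).1, fun v hv => (hp v hv).2⟩

def switching (p : V → V) : Set (V × V) := {e | N.isTreeArc e ∨ (N.isRet e.2 ∧ e.1 = p e.2)}

@[simp]
theorem mem_switching {p : V → V} {u v : V} :
    (u, v) ∈ N.switching p ↔ N.isTreeArc (u, v) ∨ (N.isRet v ∧ u = p v) :=
  Iff.rfl

theorem mem_verts_of_inTree {T : Set (V × V)} (hT : T ⊆ N.arcs) {v : V}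
    (hv : inTree T N.root v) : v ∈ N.verts := by
  rcases hv with rfl | ⟨u, hu⟩ | ⟨u, hu⟩
  · exact N.root_mem
  · exact (N.arc_mem _ (hT hu)).2
  · exact (N.arc_mem _ (hT hu)).1

section Switching

variable {N} {p : V → V}

theorem switching_subset_arcs (hp : N.IsParentChoice p) : N.switching p ⊆ N.arcs := by
  rintro ⟨u, v⟩ h
  rcases N.mem_switching.mp h with ⟨hu, -⟩ | ⟨hr, rfl⟩
  · exact hu
  · exact hp v hr

theorem exists_parent_switching {v : V} (hv : v ∈ N.verts) (hvr : v ≠ N.root) :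
    ∃ u, (u, v) ∈ N.switching p := by
  by_cases hr : N.isRet v
  · exact ⟨p v, Or.inr ⟨hr, rfl⟩⟩
  · obtain ⟨u, hu⟩ := N.exists_parent hv hvr
    exact ⟨u, Or.inl ⟨hu, hr⟩⟩

theorem reflTransGen_switching (hp : N.IsParentChoice p) {v : V} (hv : v ∈ N.verts) :
    Relation.ReflTransGen (fun a b => (a, b) ∈ N.switching p) N.root v := by
  induction v using N.wellFounded_parent.induction with
  | _ v ih =>
    by_cases hvr : v = N.root
    · exact hvr ▸ .refl
    · obtain ⟨u, hu⟩ := exists_parent_switching hv hvr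
      have hua := switching_subset_arcs hp hu
      exact (ih u hua (N.arc_mem _ hua).1).tail hu

theorem isConnectingSubtree_switching (hp : N.IsParentChoice p) (hTC : N.TreeChild) :
    N.IsConnectingSubtree (N.switching p) N.leaves where
  subset _ he := switching_subset_arcs hp he
  unique_parent u u' v h h' := by
    rw [mem_switching] at h h'
    rcases h with ⟨hu, hr⟩ | ⟨hr, rfl⟩ <;> rcases h' with ⟨hu', hr'⟩ | ⟨hr', rfl⟩
    · exact N.eq_of_mem_arcs_of_not_isRet hr hu hu'
    · exact absurd hr' hr
    · exact absurd hr hr'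
    · rfl
  root_no_parent u h := N.root_indeg u (switching_subset_arcs hp h)
  reach_root _ hv := reflTransGen_switching hp (N.mem_verts_of_inTree (switching_subset_arcs hp) hv)
  sinks := by
    ext v
    constructor
    · rintro ⟨hin, hout⟩
      have hv := N.mem_verts_of_inTree (switching_subset_arcs hp) hin
      refine ⟨hv, fun u hu => ?_⟩
      obtain ⟨c, hc, hcr⟩ := hTC v hv ⟨u, hu⟩
      exact hout c (Or.inl ⟨hc, hcr⟩)
    · rintro ⟨hv, hleaf⟩
      refine ⟨?_, fun u hu => hleaf u (switching_subset_arcs hp hu)⟩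
      by_cases hvr : v = N.root
      · exact Or.inl hvr
      · exact Or.inr (Or.inl (exists_parent_switching hv hvr))

theorem subtreeWeight_switching (hp : N.IsParentChoice p) :
    N.subtreeWeight (N.switching p) = (∑ e ∈ N.arcs.filter (fun e => N.isTreeArc e), N.w e) +
      ∑ v ∈ N.verts.filter (fun v => N.isRet v), N.w (p v, v) := by
  have hsplit : N.arcs.filter (fun e => e ∈ N.switching p) =
      N.arcs.filter (fun e => N.isTreeArc e) ∪
        (N.verts.filter (fun v => N.isRet v)).image (fun v => (p v, v)) := by
    ext ⟨u, v⟩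
    simp only [Finset.mem_filter, mem_switching, Finset.mem_union, Finset.mem_image, Prod.mk.injEq]
    constructor
    · rintro ⟨huv, he | ⟨hr, rfl⟩⟩
      · exact Or.inl ⟨huv, he⟩
      · exact Or.inr ⟨v, ⟨(N.arc_mem _ huv).2, hr⟩, rfl, rfl⟩
    · rintro (⟨huv, he⟩ | ⟨v, ⟨-, hr⟩, rfl, rfl⟩)
      · exact ⟨huv, Or.inl he⟩
      · exact ⟨hp v hr, Or.inr ⟨hr, rfl⟩⟩
  have hdisj : Disjoint (N.arcs.filter (fun e => N.isTreeArc e))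
      ((N.verts.filter (fun v => N.isRet v)).image (fun v => (p v, v))) := by
    simp only [Finset.disjoint_left, Finset.mem_filter, Finset.mem_image, not_exists, not_and]
    rintro _ ⟨-, -, hnr⟩ v ⟨-, hr⟩ rfl
    exact hnr hr
  rw [subtreeWeight, hsplit, Finset.sum_union hdisj,
    Finset.sum_image fun _ _ _ _ h => (Prod.mk.inj h).2]

end Switching

namespace IsConnectingSubtree

variable {N} {T : Set (V × V)}

theorem exists_parent {S : Set V} (hT : N.IsConnectingSubtree T S) {v : V}
    (hv : inTree T N.root v) (hvr : v ≠ N.root) : ∃ u, (u, v) ∈ T := by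
  rcases (hT.reach_root v hv).cases_tail with h | ⟨u, _, hu⟩
  · exact absurd h hvr
  · exact ⟨u, hu⟩

variable (hTC : N.TreeChild) (hT : N.IsConnectingSubtree T N.leaves)
include hTC hT

theorem inTree_of_mem_verts {v : V} (hv : v ∈ N.verts) : inTree T N.root v := by
  induction v using N.wellFounded_child.induction with
  | _ v ih =>
    by_cases hout : ∃ u, (v, u) ∈ N.arcs
    · obtain ⟨u, hu, hur⟩ := hTC v hv hout
      obtain ⟨c, hc⟩ := hT.exists_parent (ih u hu (N.arc_mem _ hu).2) (N.ne_root_of_mem_arcs hu)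
      have hcv : c = v := N.eq_of_mem_arcs_of_not_isRet hur (hT.subset _ hc) hu
      exact Or.inr (Or.inr ⟨u, hcv ▸ hc⟩)
    · have hleaf : v ∈ N.leaves := ⟨hv, not_exists.mp hout⟩
      rw [← hT.sinks] at hleaf
      exact hleaf.1

theorem exists_parent_of_mem_arcs {u v : V} (huv : (u, v) ∈ N.arcs) : ∃ c, (c, v) ∈ T :=
  hT.exists_parent (hT.inTree_of_mem_verts hTC (N.arc_mem _ huv).2) (N.ne_root_of_mem_arcs huv)

theorem mem_of_isTreeArc {e : V × V} (he : N.isTreeArc e) : e ∈ T := by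
  obtain ⟨u, v⟩ := e
  obtain ⟨huv, hnr⟩ := he
  obtain ⟨c, hc⟩ := hT.exists_parent_of_mem_arcs hTC huv
  rwa [N.eq_of_mem_arcs_of_not_isRet hnr huv (hT.subset _ hc)]

theorem exists_isParentChoice_eq_switching : ∃ p, N.IsParentChoice p ∧ T = N.switching p := by
  have hpar : ∀ v, ∃ u, N.isRet v → (u, v) ∈ T := fun v => by
    by_cases hr : N.isRet v
    · obtain ⟨u, hu⟩ := N.exists_mem_arcs_of_isRet hr
      obtain ⟨c, hc⟩ := hT.exists_parent_of_mem_arcs hTC hu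
      exact ⟨c, fun _ => hc⟩
    · exact ⟨v, fun h => absurd h hr⟩
  choose p hp using hpar
  refine ⟨p, fun v hr => hT.subset _ (hp v hr), Set.ext fun ⟨u, v⟩ => ?_⟩
  rw [N.mem_switching]
  constructor
  · intro h
    by_cases hr : N.isRet v
    · exact Or.inr ⟨hr, hT.unique_parent _ _ _ h (hp v hr)⟩
    · exact Or.inl ⟨hT.subset _ h, hr⟩
  · rintro (he | ⟨hr, rfl⟩)
    · exact hT.mem_of_isTreeArc hTC he
    · exact hp v hr

end IsConnectingSubtree

end PhyloNetwork

attribute [local instance] Classical.propDecidable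

/-- for a tree-child rooted binary phylogenetic network `N`, the minimum
of `∑_{e ∈ T} w(e)` over all connecting subtrees `T` for the leaf set `X` exists and
equals the sum of the weights of all tree arcs of `N` plus the sum, over all
reticulations `v` of `N`, of the minimum weight of the two reticulation arcs into `v`. -/
theorem treechild_minWeight_formula {V : Type} (N : PhyloNetwork V) (hTC : N.TreeChild) :
    IsLeast {t : ℝ | ∃ T : Set (V × V), N.IsConnectingSubtree T N.leaves ∧
        t = N.subtreeWeight T}
      ((∑ e ∈ N.arcs.filter (fun e => N.isTreeArc e), N.w e) +
        ∑ v ∈ N.verts.filter (fun v => N.isRet v),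
          sInf {t : ℝ | ∃ u : V, (u, v) ∈ N.arcs ∧ t = N.w (u, v)}) := by
  constructor
  · obtain ⟨p, hp, hpw⟩ := N.exists_isParentChoice_w_eq_sInf
    refine ⟨N.switching p, N.isConnectingSubtree_switching hp hTC, ?_⟩
    rw [N.subtreeWeight_switching hp]
    exact congrArg _ (Finset.sum_congr rfl fun v hv => (hpw v (Finset.mem_filter.mp hv).2).symm)
  · rintro _ ⟨T, hT, rfl⟩
    obtain ⟨p, hp, rfl⟩ := hT.exists_isParentChoice_eq_switching hTC
    rw [N.subtreeWeight_switching hp]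
    gcongr with v hv
    exact N.csInf_inArcWeights_le (hp v (Finset.mem_filter.mp hv).2)
end
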